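/- arXiv:2309.03585 — 4 statements merged into one kernel-verified Lean document; each statement's English description precedes it below -/
import Mathlib

section
/- The curve Y(t) = Q exp(tA)[I_p;0] (with Q ∈ O(n), A = [[Ω,−Kᵀ],[K,0]] skew-symmetric) satisfies the geodesic ODE of the Stiefel manifold with the canonical metric: Ÿ + ẎẎᵀY + Y((YᵀẎ)² + ẎᵀẎ) = 0. -/
open Matrix NormedSpace

attribute [local instance] Matrix.frobeniusNormedAddCommGroup Matrix.frobeniusNormedSpace

/-- The Stiefel geodesic `Y(t) = Q exp(tA) [I_p; 0]` with `Q = [Y₀ Y₀⊥]` and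
`A = [[Ω, −Kᵀ],[K, 0]]`. -/
noncomputable def stiefelGeodesic {n p : ℕ} (Y₀ : Matrix (Fin n) (Fin p) ℝ)
    (Y₀perp : Matrix (Fin n) (Fin (n - p)) ℝ)
    (Ω : Matrix (Fin p) (Fin p) ℝ) (K : Matrix (Fin (n - p)) (Fin p) ℝ) (t : ℝ) :
    Matrix (Fin n) (Fin p) ℝ :=
  fromCols Y₀ Y₀perp * exp (t • fromBlocks Ω (-Kᵀ) K 0) *
    fromRows (1 : Matrix (Fin p) (Fin p) ℝ) (0 : Matrix (Fin (n - p)) (Fin p) ℝ)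

/-!
Write `Y(t) = U J` with `U = Q exp(tA)` and `J = [I_p; 0]`, so that `Ẏ = U A J` and `Ÿ = U A² J`.
Since `U` is an isometry and `A` is skew, every product `YᵀẎ`, `ẎᵀẎ`, `ẎᵀY` loses its `U`,
and the left-hand side of the geodesic equation becomes `U` times
`A²J − AJ(JᵀAJ) + J((JᵀAJ)² − JᵀA²J) = (I − JJᵀ) A (I − JJᵀ) A J`,
which vanishes because the lower right block of `A` is zero.
-/

namespace Matrix

variable {l m o : Type*} [Fintype l] [Fintype m] [Fintype o]

section Derivative

attribute [local instance] Matrix.frobeniusNormedRing Matrix.frobeniusNormedAlgebra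

variable {𝕂 : Type*} [RCLike 𝕂] [DecidableEq m]

theorem hasDerivAt_mul_exp_smul_mul (Q : Matrix l m 𝕂) (A : Matrix m m 𝕂) (X : Matrix m o 𝕂)
    (t : 𝕂) :
    HasDerivAt (fun s : 𝕂 => Q * exp (s • A) * X) (Q * exp (t • A) * (A * X)) t := by
  have h := (mulRightLinearMap l 𝕂 X ∘ₗ mulLeftLinearMap m 𝕂 Q).toContinuousLinearMap.hasFDerivAt
    |>.comp_hasDerivAt t (hasDerivAt_exp_smul_const A t)
  rw [show Q * exp (t • A) * (A * X) = Q * (exp (t • A) * A) * X by simp only [Matrix.mul_assoc]]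
  exact h

end Derivative

variable [DecidableEq m]

theorem transpose_exp_mul_exp_of_transpose_eq_neg {𝔸 : Type*} [NormedCommRing 𝔸]
    [NormedAlgebra ℚ 𝔸] [CompleteSpace 𝔸] {A : Matrix m m 𝔸} (hA : Aᵀ = -A) :
    (exp A)ᵀ * exp A = 1 := by
  rw [← exp_transpose, hA, ← exp_add_of_commute _ _ (Commute.refl A).neg_left, neg_add_cancel,
    exp_zero]

end Matrix

def stiefelGeodesicResidual {R l o : Type*} [CommRing R] [Fintype l] [Fintype o]
    [DecidableEq o] (Y Yd Ydd : Matrix l o R) : Matrix l o R :=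
  Ydd + Yd * Ydᵀ * Y + Y * ((Yᵀ * Yd) ^ 2 + Ydᵀ * Yd)

theorem stiefelGeodesicResidual_isometry_mul {R l m o : Type*} [CommRing R] [Fintype l]
    [Fintype m] [Fintype o] [DecidableEq m] [DecidableEq o] {U : Matrix l m R}
    {A : Matrix m m R} (X : Matrix m o R) (hU : Uᵀ * U = 1) (hA : Aᵀ = -A) :
    stiefelGeodesicResidual (U * X) (U * (A * X)) (U * (A * (A * X))) =
      U * (A * (A * X) - A * X * (Xᵀ * (A * X)) +
        X * ((Xᵀ * (A * X)) ^ 2 - Xᵀ * (A * (A * X)))) := by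
  have cancel (Y Z : Matrix m o R) : (U * Y)ᵀ * (U * Z) = Yᵀ * Z := by
    rw [transpose_mul, Matrix.mul_assoc, ← Matrix.mul_assoc Uᵀ, hU, Matrix.one_mul]
  have skew (Y Z : Matrix m o R) : (A * Y)ᵀ * Z = -(Yᵀ * (A * Z)) := by
    rw [transpose_mul, hA, Matrix.mul_neg, Matrix.neg_mul, Matrix.mul_assoc]
  rw [stiefelGeodesicResidual, Matrix.mul_assoc (U * (A * X)) (U * (A * X))ᵀ, cancel, cancel,
    cancel, skew, skew]
  simp only [Matrix.mul_add, Matrix.mul_neg, Matrix.mul_assoc, sub_eq_add_neg]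

theorem fromBlocks_geodesic_bracket_eq_zero {p q : ℕ} (Ω : Matrix (Fin p) (Fin p) ℝ)
    (K : Matrix (Fin q) (Fin p) ℝ) {A : Matrix (Fin p ⊕ Fin q) (Fin p ⊕ Fin q) ℝ}
    {X : Matrix (Fin p ⊕ Fin q) (Fin p) ℝ} (hA : A = fromBlocks Ω (-Kᵀ) K 0)
    (hX : X = fromRows 1 0) :
    A * (A * X) - A * X * (Xᵀ * (A * X)) + X * ((Xᵀ * (A * X)) ^ 2 - Xᵀ * (A * (A * X))) = 0 := by
  subst hA hX
  ext (i | i) j <;>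
    simp [fromBlocks_mul_fromRows, transpose_fromRows, fromCols_mul_fromRows, fromRows_mul, pow_two]

theorem stiefelGeodesic_ode_general {n p : ℕ} (Y₀ : Matrix (Fin n) (Fin p) ℝ)
    (Y₀perp : Matrix (Fin n) (Fin (n - p)) ℝ)
    (hQ : (fromCols Y₀ Y₀perp)ᵀ * fromCols Y₀ Y₀perp = 1)
    (Ω : Matrix (Fin p) (Fin p) ℝ) (hΩ : Ωᵀ = -Ω)
    (K : Matrix (Fin (n - p)) (Fin p) ℝ)
    (Yd Ydd : ℝ → Matrix (Fin n) (Fin p) ℝ)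
    (hYd : ∀ t : ℝ, HasDerivAt (stiefelGeodesic Y₀ Y₀perp Ω K) (Yd t) t)
    (hYdd : ∀ t : ℝ, HasDerivAt Yd (Ydd t) t) :
    ∀ t : ℝ,
      Ydd t + Yd t * (Yd t)ᵀ * stiefelGeodesic Y₀ Y₀perp Ω K t +
        stiefelGeodesic Y₀ Y₀perp Ω K t *
          (((stiefelGeodesic Y₀ Y₀perp Ω K t)ᵀ * Yd t) ^ 2 + (Yd t)ᵀ * Yd t) = 0 := by
  intro t
  set Q := fromCols Y₀ Y₀perp
  set A := fromBlocks Ω (-Kᵀ) K 0 with hA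
  set J : Matrix (Fin p ⊕ Fin (n - p)) (Fin p) ℝ := fromRows 1 0 with hJ
  have hAskew : Aᵀ = -A := by simp [A, fromBlocks_transpose, fromBlocks_neg, hΩ]
  have hE : (exp (t • A))ᵀ * exp (t • A) = 1 :=
    transpose_exp_mul_exp_of_transpose_eq_neg (by rw [transpose_smul, hAskew, smul_neg])
  have hU : (Q * exp (t • A))ᵀ * (Q * exp (t • A)) = 1 := by
    rw [transpose_mul, Matrix.mul_assoc, ← Matrix.mul_assoc Qᵀ, hQ, Matrix.one_mul, hE]
  have hYd_eq : Yd = fun s => Q * exp (s • A) * (A * J) :=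
    funext fun s => (hYd s).unique (hasDerivAt_mul_exp_smul_mul Q A J s)
  have hYdd_eq : Ydd t = Q * exp (t • A) * (A * (A * J)) :=
    (hYdd t).unique (hYd_eq ▸ hasDerivAt_mul_exp_smul_mul Q A (A * J) t)
  change stiefelGeodesicResidual (Q * exp (t • A) * J) (Yd t) (Ydd t) = 0
  rw [hYdd_eq, hYd_eq, stiefelGeodesicResidual_isometry_mul J hU hAskew,
    fromBlocks_geodesic_bracket_eq_zero Ω K hA hJ, Matrix.mul_zero]

/-- The curve `Y(t) = Q exp(tA) [I_p; 0]` satisfies the geodesic ODE of the Stiefel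
manifold with the canonical metric: `Ÿ + ẎẎᵀY + Y((YᵀẎ)² + ẎᵀẎ) = 0`. -/
theorem stiefelGeodesic_ode {n p : ℕ} (Y₀ : Matrix (Fin n) (Fin p) ℝ)
    (Y₀perp : Matrix (Fin n) (Fin (n - p)) ℝ)
    (hQ : (fromCols Y₀ Y₀perp)ᵀ * fromCols Y₀ Y₀perp = 1)
    (hQ' : fromCols Y₀ Y₀perp * (fromCols Y₀ Y₀perp)ᵀ = 1)
    (Ω : Matrix (Fin p) (Fin p) ℝ) (hΩ : Ωᵀ = -Ω)
    (K : Matrix (Fin (n - p)) (Fin p) ℝ)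
    (Yd Ydd : ℝ → Matrix (Fin n) (Fin p) ℝ)
    (hYd : ∀ t : ℝ, HasDerivAt (stiefelGeodesic Y₀ Y₀perp Ω K) (Yd t) t)
    (hYdd : ∀ t : ℝ, HasDerivAt Yd (Ydd t) t) :
    ∀ t : ℝ,
      Ydd t + Yd t * (Yd t)ᵀ * stiefelGeodesic Y₀ Y₀perp Ω K t +
        stiefelGeodesic Y₀ Y₀perp Ω K t *
          (((stiefelGeodesic Y₀ Y₀perp Ω K t)ᵀ * Yd t) ^ 2 + (Yd t)ᵀ * Yd t) = 0 :=
  stiefelGeodesic_ode_general Y₀ Y₀perp hQ Ω hΩ K Yd Ydd hYd hYdd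
end

section
/- Let K ∈ ℝ^{(n-p)×p} with n ≥ 2p, and let K = QR be a QR factorization with Q ∈ ℝ^{(n-p)×p} orthonormal and R ∈ ℝ^{p×p}. Let Y₀ ∈ St(n,p) with orthonormal complement Y₀⊥, and Ω ∈ ℝ^{p×p} skew-symmetric. Then [Y₀ Y₀⊥] exp([[Ω,−Kᵀ],[K,0_{n-p}]]) [I_p; 0_{(n-p)×p}] = [Y₀ Y₀⊥Q] exp([[Ω,−Rᵀ],[R,0_p]]) [I_p; 0_p]. -/
/-!
With `U = diag(I_p, Q)` one has `[[Ω, -(QR)ᵀ], [QR, 0]] U = U [[Ω, -Rᵀ], [R, 0]]` because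
`QᵀQ = I`, and an intertwiner of two matrices intertwines their exponentials, term by term in
the exponential series. Since `U [I_p; 0] = [I_p; 0]` and `[Y₀ Y₀⊥] U = [Y₀ Y₀⊥Q]`, the two sides
agree.
-/

open Matrix NormedSpace

open scoped Norms.Operator in
theorem Matrix.exp_mul_eq_mul_exp_of_mul_eq_mul {𝕂 m k : Type*} [RCLike 𝕂]
    [Fintype m] [DecidableEq m] [Fintype k] [DecidableEq k]
    {A : Matrix m m 𝕂} {B : Matrix k k 𝕂} {U : Matrix m k 𝕂} (h : A * U = U * B) :
    exp A * U = U * exp B := by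
  have hpow (j : ℕ) : A ^ j * U = U * B ^ j := by
    induction j with
    | zero => simp
    | succ j ih =>
      rw [pow_succ, pow_succ, Matrix.mul_assoc, h, ← Matrix.mul_assoc, ih, Matrix.mul_assoc]
  have hA := (exp_series_hasSum_exp' (𝕂 := 𝕂) A).map (mulRightLinearMap m 𝕂 U)
    (continuous_id.matrix_mul continuous_const)
  have hB := (exp_series_hasSum_exp' (𝕂 := 𝕂) B).map (mulLeftLinearMap k 𝕂 U)
    (continuous_const.matrix_mul continuous_id)
  simp only [Function.comp_def, mulRightLinearMap_apply, mulLeftLinearMap_apply, Matrix.smul_mul,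
    Matrix.mul_smul, hpow] at hA hB
  exact hA.unique hB

theorem fromBlocks_mul_fromBlocks_one_of_transpose_mul_self {R m k : Type*} [CommRing R]
    [Fintype m] [DecidableEq m] [Fintype k]
    (Ω : Matrix m m R) {Q : Matrix k m R} (hQ : Qᵀ * Q = 1) (T : Matrix m m R) :
    fromBlocks Ω (-(Q * T)ᵀ) (Q * T) (0 : Matrix k k R) * fromBlocks (1 : Matrix m m R) 0 0 Q
      = fromBlocks (1 : Matrix m m R) 0 0 Q * fromBlocks Ω (-Tᵀ) T (0 : Matrix m m R) := by
  rw [fromBlocks_multiply, fromBlocks_multiply]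
  simp [transpose_mul, Matrix.mul_assoc, hQ]

theorem stiefel_smaller_formulation_general {n p : ℕ}
    (Y₀ : Matrix (Fin n) (Fin p) ℝ) (Y₀perp : Matrix (Fin n) (Fin (n - p)) ℝ)
    (Ω : Matrix (Fin p) (Fin p) ℝ)
    (K : Matrix (Fin (n - p)) (Fin p) ℝ)
    (Q : Matrix (Fin (n - p)) (Fin p) ℝ) (R : Matrix (Fin p) (Fin p) ℝ)
    (hQ : Qᵀ * Q = 1) (hKQR : K = Q * R) :
    fromCols Y₀ Y₀perp *
        NormedSpace.exp (fromBlocks Ω (-Kᵀ) K (0 : Matrix (Fin (n - p)) (Fin (n - p)) ℝ)) *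
        fromRows (1 : Matrix (Fin p) (Fin p) ℝ) (0 : Matrix (Fin (n - p)) (Fin p) ℝ)
      = fromCols Y₀ (Y₀perp * Q) *
          NormedSpace.exp (fromBlocks Ω (-Rᵀ) R (0 : Matrix (Fin p) (Fin p) ℝ)) *
          fromRows (1 : Matrix (Fin p) (Fin p) ℝ) (0 : Matrix (Fin p) (Fin p) ℝ) := by
  subst hKQR
  let U : Matrix (Fin p ⊕ Fin (n - p)) (Fin p ⊕ Fin p) ℝ := fromBlocks 1 0 0 Q
  have hcols : fromCols Y₀ Y₀perp * U = fromCols Y₀ (Y₀perp * Q) := by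
    simp [U, fromCols_mul_fromBlocks]
  have hrows : U * fromRows (1 : Matrix (Fin p) (Fin p) ℝ) (0 : Matrix (Fin p) (Fin p) ℝ)
      = fromRows 1 (0 : Matrix (Fin (n - p)) (Fin p) ℝ) := by
    simp [U, fromBlocks_mul_fromRows]
  rw [Matrix.mul_assoc, ← hrows, ← Matrix.mul_assoc (exp _),
    exp_mul_eq_mul_exp_of_mul_eq_mul (fromBlocks_mul_fromBlocks_one_of_transpose_mul_self Ω hQ R),
    ← Matrix.mul_assoc, ← Matrix.mul_assoc, hcols]

/-- Reduction of the Stiefel geodesic formula from `St(n,p)` to `St(2p,p)`: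
if `K = QR` is a QR factorization with `Q` orthonormal, then
`[Y₀ Y₀⊥] exp([[Ω,−Kᵀ],[K,0]]) [I_p;0] = [Y₀ Y₀⊥Q] exp([[Ω,−Rᵀ],[R,0]]) [I_p;0]`. -/
theorem stiefel_smaller_formulation {n p : ℕ} (hnp : 2 * p ≤ n)
    (Y₀ : Matrix (Fin n) (Fin p) ℝ) (Y₀perp : Matrix (Fin n) (Fin (n - p)) ℝ)
    (hQorth : (fromCols Y₀ Y₀perp)ᵀ * fromCols Y₀ Y₀perp = 1)
    (hQorth' : fromCols Y₀ Y₀perp * (fromCols Y₀ Y₀perp)ᵀ = 1)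
    (Ω : Matrix (Fin p) (Fin p) ℝ) (hΩ : Ωᵀ = -Ω)
    (K : Matrix (Fin (n - p)) (Fin p) ℝ)
    (Q : Matrix (Fin (n - p)) (Fin p) ℝ) (R : Matrix (Fin p) (Fin p) ℝ)
    (hQ : Qᵀ * Q = 1) (hKQR : K = Q * R) :
    fromCols Y₀ Y₀perp *
        NormedSpace.exp (fromBlocks Ω (-Kᵀ) K (0 : Matrix (Fin (n - p)) (Fin (n - p)) ℝ)) *
        fromRows (1 : Matrix (Fin p) (Fin p) ℝ) (0 : Matrix (Fin (n - p)) (Fin p) ℝ)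
      = fromCols Y₀ (Y₀perp * Q) *
          NormedSpace.exp (fromBlocks Ω (-Rᵀ) R (0 : Matrix (Fin p) (Fin p) ℝ)) *
          fromRows (1 : Matrix (Fin p) (Fin p) ℝ) (0 : Matrix (Fin p) (Fin p) ℝ) :=
  stiefel_smaller_formulation_general Y₀ Y₀perp Ω K Q R hQ hKQR
end

section
/- Let Y₀, Y₀⊥ be such that [Y₀ Y₀⊥] is orthogonal, let M be any invertible (n−p)×(n−p) matrix, and let A = [[Ω,−Kᵀ],[K,0]]. Then [Y₀ Y₀⊥] exp(tA) [I_p;0] = [Y₀ Y₀⊥M⁻¹] exp(t[[Ω, −KᵀM⁻¹],[MK, 0]]) [I_p;0] for all t. -/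
/-!
Conjugating a block matrix by `S = diag(1, M)` replaces its off-diagonal blocks `B, C` by
`B M⁻¹, M C`, and `exp (S A S⁻¹) = S (exp A) S⁻¹`. The outer factor `S` is absorbed by
`[Y₀ Y₀⊥M⁻¹] S = [Y₀ Y₀⊥]` and `S⁻¹` fixes `[I_p; 0]`.
-/

open Matrix NormedSpace

namespace Matrix

variable {k l m n α : Type*} [Fintype m] [Fintype n] [DecidableEq m]

section CommRing

variable [CommRing α]

-- Without the ascriptions on `1` and `0`, `*` is elaborated with the `CStarMatrix` instance.
theorem fromBlocks_one_zero_zero_mul_fromRows_zero (M : Matrix n n α) (X : Matrix m l α) :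
    fromBlocks (1 : Matrix m m α) 0 0 M * fromRows X (0 : Matrix n l α) = fromRows X 0 := by
  simp [fromBlocks_mul_fromRows]

variable [DecidableEq n]

theorem inv_fromBlocks_one_zero_zero {M : Matrix n n α} (hM : IsUnit M) :
    (fromBlocks (1 : Matrix m m α) 0 0 M)⁻¹ = fromBlocks (1 : Matrix m m α) 0 0 M⁻¹ := by
  rw [inv_fromBlocks_zero₂₁_of_isUnit_iff _ _ _ (iff_of_true isUnit_one hM)]
  simp

theorem fromBlocks_one_zero_zero_conj (M : Matrix n n α) (A : Matrix m m α) (B : Matrix m n α)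
    (C : Matrix n m α) (D : Matrix n n α) :
    fromBlocks (1 : Matrix m m α) 0 0 M * fromBlocks A B C D
        * fromBlocks (1 : Matrix m m α) 0 0 M⁻¹
      = fromBlocks A (B * M⁻¹) (M * C) (M * D * M⁻¹) := by
  simp [fromBlocks_multiply, Matrix.mul_assoc]

theorem fromCols_mul_fromBlocks_one_zero_zero {M : Matrix n n α} (hM : IsUnit M)
    (Y : Matrix k m α) (Z : Matrix k n α) :
    fromCols Y (Z * M⁻¹) * fromBlocks (1 : Matrix m m α) 0 0 M = fromCols Y Z := by
  simp [fromCols_mul_fromBlocks, nonsing_inv_mul_cancel_right _ _ ((isUnit_iff_isUnit_det M).mp hM)]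

end CommRing

section Exp

variable [DecidableEq n] [NormedCommRing α] [NormedAlgebra ℚ α] [CompleteSpace α]

theorem exp_fromBlocks_rescale {M : Matrix n n α} (hM : IsUnit M) (A : Matrix m m α)
    (B : Matrix m n α) (C : Matrix n m α) (D : Matrix n n α) :
    exp (fromBlocks A (B * M⁻¹) (M * C) (M * D * M⁻¹))
      = fromBlocks (1 : Matrix m m α) 0 0 M * exp (fromBlocks A B C D)
        * fromBlocks (1 : Matrix m m α) 0 0 M⁻¹ := by
  have hS : IsUnit (fromBlocks (1 : Matrix m m α) 0 0 M) :=
    isUnit_fromBlocks_zero₂₁.mpr ⟨isUnit_one, hM⟩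
  rw [← fromBlocks_one_zero_zero_conj, ← inv_fromBlocks_one_zero_zero hM, exp_conj _ _ hS]

theorem fromCols_mul_exp_fromBlocks_rescale_mul_fromRows_zero {M : Matrix n n α}
    (hM : IsUnit M) (Y : Matrix k m α) (Z : Matrix k n α) (X : Matrix m l α)
    (A : Matrix m m α) (B : Matrix m n α) (C : Matrix n m α) (D : Matrix n n α) :
    fromCols Y (Z * M⁻¹) * exp (fromBlocks A (B * M⁻¹) (M * C) (M * D * M⁻¹))
        * fromRows X (0 : Matrix n l α)
      = fromCols Y Z * exp (fromBlocks A B C D) * fromRows X (0 : Matrix n l α) := by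
  conv_rhs => rw [← fromCols_mul_fromBlocks_one_zero_zero hM Y Z,
    ← fromBlocks_one_zero_zero_mul_fromRows_zero M⁻¹ X]
  rw [exp_fromBlocks_rescale hM]
  simp only [Matrix.mul_assoc]

end Exp

end Matrix

theorem stiefel_geodesic_basis_freedom_general {n p : ℕ}
    (Y₀ : Matrix (Fin n) (Fin p) ℝ) (Y₀perp : Matrix (Fin n) (Fin (n - p)) ℝ)
    (Ω : Matrix (Fin p) (Fin p) ℝ)
    (K : Matrix (Fin (n - p)) (Fin p) ℝ)
    (M : Matrix (Fin (n - p)) (Fin (n - p)) ℝ) (hM : IsUnit M) :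
    ∀ t : ℝ,
      fromCols Y₀ Y₀perp *
          exp (t • fromBlocks Ω (-Kᵀ) K (0 : Matrix (Fin (n - p)) (Fin (n - p)) ℝ)) *
          fromRows (1 : Matrix (Fin p) (Fin p) ℝ) (0 : Matrix (Fin (n - p)) (Fin p) ℝ)
        = fromCols Y₀ (Y₀perp * M⁻¹) *
            exp (t • fromBlocks Ω (-(Kᵀ * M⁻¹)) (M * K)
              (0 : Matrix (Fin (n - p)) (Fin (n - p)) ℝ)) *
            fromRows (1 : Matrix (Fin p) (Fin p) ℝ) (0 : Matrix (Fin (n - p)) (Fin p) ℝ) := by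
  intro t
  have hrescale : t • fromBlocks Ω (-(Kᵀ * M⁻¹)) (M * K) 0
      = fromBlocks (t • Ω) ((t • -Kᵀ) * M⁻¹) (M * t • K) (M * t • 0 * M⁻¹) := by
    simp [fromBlocks_smul, Matrix.neg_mul]
  rw [hrescale, fromCols_mul_exp_fromBlocks_rescale_mul_fromRows_zero hM, fromBlocks_smul]

/-- Freedom in the choice of the orthogonal complement in the Stiefel geodesic
formula: for any invertible `M`,
`[Y₀ Y₀⊥] exp(tA) [I_p;0] = [Y₀ Y₀⊥M⁻¹] exp(t[[Ω,−KᵀM⁻¹],[MK,0]]) [I_p;0]`. -/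
theorem stiefel_geodesic_basis_freedom {n p : ℕ}
    (Y₀ : Matrix (Fin n) (Fin p) ℝ) (Y₀perp : Matrix (Fin n) (Fin (n - p)) ℝ)
    (hQorth : (fromCols Y₀ Y₀perp)ᵀ * fromCols Y₀ Y₀perp = 1)
    (hQorth' : fromCols Y₀ Y₀perp * (fromCols Y₀ Y₀perp)ᵀ = 1)
    (Ω : Matrix (Fin p) (Fin p) ℝ) (hΩ : Ωᵀ = -Ω)
    (K : Matrix (Fin (n - p)) (Fin p) ℝ)
    (M : Matrix (Fin (n - p)) (Fin (n - p)) ℝ) (hM : IsUnit M) :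
    ∀ t : ℝ,
      fromCols Y₀ Y₀perp *
          exp (t • fromBlocks Ω (-Kᵀ) K (0 : Matrix (Fin (n - p)) (Fin (n - p)) ℝ)) *
          fromRows (1 : Matrix (Fin p) (Fin p) ℝ) (0 : Matrix (Fin (n - p)) (Fin p) ℝ)
        = fromCols Y₀ (Y₀perp * M⁻¹) *
            exp (t • fromBlocks Ω (-(Kᵀ * M⁻¹)) (M * K)
              (0 : Matrix (Fin (n - p)) (Fin (n - p)) ℝ)) *
            fromRows (1 : Matrix (Fin p) (Fin p) ℝ) (0 : Matrix (Fin (n - p)) (Fin p) ℝ) :=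
  stiefel_geodesic_basis_freedom_general Y₀ Y₀perp Ω K M hM
end

section
/- For all real α with 0 ≤ α ≤ π, |sinc α| ≥ 1 − α/π, where sinc α = sin(α)/α for α ≠ 0 and sinc 0 = 1. -/
/-! The parabola `x (π - x) / π` and `sin` both vanish at `0` and `π` and are symmetric about `π / 2`,
so it suffices to compare them on `[0, π / 2]`. There `sin x ≥ x - x³ / 6`, and
`π (x - x³ / 6) - x (π - x) = x² (6 - π x) / 6 ≥ 0` because `π x ≤ π² / 2 < 6`. -/

/-- The unnormalized sinc function: `sinc x = sin x / x` for `x ≠ 0`, `sinc 0 = 1`. -/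
noncomputable def sinc (x : ℝ) : ℝ := if x = 0 then 1 else Real.sin x / x

namespace Real

theorem mul_pi_sub_le_pi_mul_sin_of_le_pi_div_two {x : ℝ} (hx₀ : 0 ≤ x) (hx : x ≤ π / 2) :
    x * (π - x) ≤ π * sin x := by
  have hπx : π * x ≤ 6 := by nlinarith [pi_pos, pi_lt_d2]
  calc x * (π - x) ≤ π * (x - x ^ 3 / 6) := by
        nlinarith [mul_nonneg (sq_nonneg x) (sub_nonneg.2 hπx)]
    _ ≤ π * sin x := mul_le_mul_of_nonneg_left (sin_ge_sub_cube hx₀) pi_pos.le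

theorem mul_pi_sub_le_pi_mul_sin {x : ℝ} (hx₀ : 0 ≤ x) (hx : x ≤ π) :
    x * (π - x) ≤ π * sin x := by
  rcases le_total x (π / 2) with hle | hge
  · exact mul_pi_sub_le_pi_mul_sin_of_le_pi_div_two hx₀ hle
  · have h := mul_pi_sub_le_pi_mul_sin_of_le_pi_div_two (x := π - x) (by linarith) (by linarith)
    rwa [sin_pi_sub, sub_sub_cancel, mul_comm (π - x)] at h

theorem one_sub_div_pi_le_sin_div {x : ℝ} (hx₀ : 0 < x) (hx : x ≤ π) :
    1 - x / π ≤ sin x / x := by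
  rw [le_div_iff₀ hx₀, one_sub_div pi_ne_zero, div_mul_eq_mul_div, div_le_iff₀' pi_pos, mul_comm]
  exact mul_pi_sub_le_pi_mul_sin hx₀.le hx

end Real

/-- For `0 ≤ α ≤ π`, `|sinc α| ≥ 1 − α/π`. -/
theorem abs_sinc_ge_linear (α : ℝ) (h0 : 0 ≤ α) (hπ : α ≤ Real.pi) :
    1 - α / Real.pi ≤ |sinc α| := by
  rcases h0.eq_or_lt with rfl | hpos
  · simp [sinc]
  · calc 1 - α / Real.pi ≤ Real.sin α / α := Real.one_sub_div_pi_le_sin_div hpos hπ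
      _ = sinc α := by rw [sinc, if_neg hpos.ne']
      _ ≤ |sinc α| := le_abs_self _
end
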